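/- Let X be a proper CAT(0) geodesic metric space and let a group G act on X by isometries, properly discontinuously and cocompactly (i.e. there exist p ∈ X and D > 0 such that every x ∈ X satisfies d(x, g·p) ≤ 2D for some g ∈ G). Then G has a finite symmetric generating set S and satisfies the quadratic radial isoperimetric inequality: there exist a finite set R of words over S representing the identity e, whose normal closure in F_S is the kernel of μ : F_S → G, and a constant C > 0, such that every word w = s₁⋯sₙ over S representing e satisfies Area_R(w) ≤ C · Σ_{i=1}^n (d_S(w̄(i), e) + 1). -/

import Mathlib

/-!
Fix a basepoint `p` whose orbit is `2D`-dense. To reach `g ∈ G`, walk along the geodesic from `p`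
to `g • p` in steps of length `D` and replace each point by a nearby orbit point: this is a path
from `1` to `g` with steps in `S = {s | d(p, s • p) ≤ 5D}` and length at most `5 |g|_S + 1`.
Convexity of the CAT(0) metric keeps the paths to neighbouring vertices `a` and `a s` within `19D`
of each other at all times, so they bound a ladder of `O(|a|_S + |a s|_S + 1)` cells, each a word
of length at most `42` that is trivial in `G`. A word `w` representing `e` is then filled by the
ladders along its edges, which costs `O(∑ᵢ (|w̄(i)|_S + 1))` cells.
-/

open scoped Pointwise

/-- The product in `G` of a word over the subset `S ⊆ G`. -/
def wordProd {G : Type*} [Group G] (S : Set G) (w : List S) : G :=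
  (w.map (fun s => (s : G))).prod

/-- The word metric `d_S(a,b)`: the least `n` such that `b⁻¹ * a` is a product of
`n` elements of `S`. -/
noncomputable def wordDist {G : Type*} [Group G] (S : Set G) (a b : G) : ℕ :=
  sInf {n | ∃ w : List S, w.length = n ∧ wordProd S w = b⁻¹ * a}

/-- The evaluation homomorphism `μ : F_S → G` from the free group on `S`. -/
noncomputable def muEval {G : Type*} [Group G] (S : Set G) : FreeGroup S →* G :=
  FreeGroup.lift (fun s => (s : G))

/-- A word over `S`, regarded as an element of the free group `F_S`. -/
def wordToFree {G : Type*} [Group G] (S : Set G) (w : List S) : FreeGroup S :=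
  (w.map FreeGroup.of).prod

/-- The combinatorial area of a word `w` over `S` with respect to the relator set
`R ⊆ F_S`: the least `k` such that `w = ∏_{i=1}^k vᵢ rᵢ vᵢ⁻¹` in `F_S` with each
`rᵢ ∈ R` or `rᵢ⁻¹ ∈ R`. -/
noncomputable def area {G : Type*} [Group G] (S : Set G) (R : Set (FreeGroup S))
    (w : List S) : ℕ :=
  sInf {k | ∃ v r : Fin k → FreeGroup S,
    (∀ i, r i ∈ R ∨ (r i)⁻¹ ∈ R) ∧
    wordToFree S w = (List.ofFn (fun i => v i * r i * (v i)⁻¹)).prod}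

/-- `γ : ℝ → X` is a geodesic from `x` to `y`: it is defined (relevantly) on
`[0, d(x,y)]`, starts at `x`, ends at `y`, and is an isometric embedding there. -/
def IsGeodesic {X : Type*} [MetricSpace X] (γ : ℝ → X) (x y : X) : Prop :=
  γ 0 = x ∧ γ (dist x y) = y ∧
    ∀ s ∈ Set.Icc (0 : ℝ) (dist x y), ∀ t ∈ Set.Icc (0 : ℝ) (dist x y),
      dist (γ s) (γ t) = |s - t|

/-- `X` is a geodesic metric space: every pair of points is joined by a geodesic. -/
def IsGeodesicSpace (X : Type*) [MetricSpace X] : Prop :=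
  ∀ x y : X, ∃ γ : ℝ → X, IsGeodesic γ x y

/-- `X` is a CAT(0) space: the comparison inequality holds along every geodesic. -/
def IsCAT0 (X : Type*) [MetricSpace X] : Prop :=
  ∀ x y z : X, ∀ γ : ℝ → X, IsGeodesic γ y z → ∀ t ∈ Set.Icc (0 : ℝ) 1,
    dist x (γ (t * dist y z)) ^ 2 ≤
      (1 - t) * dist x y ^ 2 + t * dist x z ^ 2 - t * (1 - t) * dist y z ^ 2

section ConjProd

variable {F : Type*} [Group F] {R : Set F} {k l : ℕ} {x y z : F}

theorem Group.mem_conjugatesOfSet_iff_exists_conj {s : Set F} :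
    y ∈ Group.conjugatesOfSet s ↔ ∃ r ∈ s, ∃ c, c * r * c⁻¹ = y := by
  simp [Group.mem_conjugatesOfSet_iff, isConj_iff]

def IsConjProd (R : Set F) (k : ℕ) (x : F) : Prop :=
  ∃ L : List F, L.length ≤ k ∧ (∀ y ∈ L, y ∈ Group.conjugatesOfSet (R ∪ R⁻¹)) ∧ L.prod = x

theorem isConjProd_one : IsConjProd R 0 (1 : F) := ⟨[], le_rfl, by simp, rfl⟩

theorem IsConjProd.of_mem (h : x ∈ R) : IsConjProd R 1 x :=
  ⟨[x], le_rfl, by simpa using Group.subset_conjugatesOfSet (Set.mem_union_left _ h), by simp⟩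

theorem IsConjProd.mono (h : IsConjProd R k x) (hkl : k ≤ l) : IsConjProd R l x :=
  let ⟨L, hL, hmem, hprod⟩ := h
  ⟨L, hL.trans hkl, hmem, hprod⟩

theorem IsConjProd.mul (hx : IsConjProd R k x) (hy : IsConjProd R l y) :
    IsConjProd R (k + l) (x * y) := by
  obtain ⟨L, hL, hLmem, rfl⟩ := hx
  obtain ⟨M, hM, hMmem, rfl⟩ := hy
  refine ⟨L ++ M, by simp only [List.length_append]; omega, ?_, List.prod_append⟩
  simpa only [List.mem_append, or_imp, forall_and] using ⟨hLmem, hMmem⟩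

theorem IsConjProd.conj (a : F) (h : IsConjProd R k x) : IsConjProd R k (a * x * a⁻¹) := by
  obtain ⟨L, hL, hmem, rfl⟩ := h
  refine ⟨L.map (MulAut.conj a), by simpa using hL, ?_, ?_⟩
  · simpa using fun y hy => Group.conj_mem_conjugatesOfSet (hmem y hy)
  · rw [← map_list_prod, MulAut.conj_apply]

theorem IsConjProd.inv (h : IsConjProd R k x) : IsConjProd R k x⁻¹ := by
  obtain ⟨L, hL, hmem, rfl⟩ := h
  refine ⟨(L.map (·⁻¹)).reverse, by simpa using hL, ?_, (List.prod_inv_reverse L).symm⟩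
  simp only [List.mem_reverse, List.mem_map, forall_exists_index, and_imp, forall_apply_eq_imp_iff₂]
  intro y hy
  obtain ⟨r, hr, c, rfl⟩ := Group.mem_conjugatesOfSet_iff_exists_conj.1 (hmem y hy)
  refine Group.mem_conjugatesOfSet_iff_exists_conj.2 ⟨r⁻¹, ?_, c, by group⟩
  simpa [or_comm] using hr

theorem IsConjProd.mem_normalClosure (h : IsConjProd R k x) : x ∈ Subgroup.normalClosure R := by
  obtain ⟨L, -, hmem, rfl⟩ := h
  refine Subgroup.list_prod_mem _ fun y hy => ?_
  obtain ⟨r, hr, c, rfl⟩ := Group.mem_conjugatesOfSet_iff_exists_conj.1 (hmem y hy)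
  have hr' : r ∈ Subgroup.normalClosure R := by
    rcases hr with hr | hr
    · exact Subgroup.subset_normalClosure hr
    · simpa using inv_mem (Subgroup.subset_normalClosure (s := R) hr)
  exact Subgroup.normalClosure_normal.conj_mem r hr' c

/-- `x ≡ y` at the cost of `k` relators; `RelCongr R k w 1` says that `w` has area at most `k`. -/
def RelCongr (R : Set F) (k : ℕ) (x y : F) : Prop := IsConjProd R k (x * y⁻¹)

theorem RelCongr.refl (x : F) : RelCongr R 0 x x := by
  simpa [RelCongr] using isConjProd_one

theorem RelCongr.of_mem (h : x * y⁻¹ ∈ R) : RelCongr R 1 x y := IsConjProd.of_mem h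

theorem RelCongr.mono (h : RelCongr R k x y) (hkl : k ≤ l) : RelCongr R l x y :=
  IsConjProd.mono h hkl

theorem RelCongr.symm (h : RelCongr R k x y) : RelCongr R k y x := by
  simpa [RelCongr] using IsConjProd.inv h

theorem RelCongr.trans (hxy : RelCongr R k x y) (hyz : RelCongr R l y z) :
    RelCongr R (k + l) x z := by
  simpa [RelCongr, mul_assoc] using IsConjProd.mul hxy hyz

theorem RelCongr.mul_left (a : F) (h : RelCongr R k x y) : RelCongr R k (a * x) (a * y) := by
  simpa [RelCongr, mul_assoc] using IsConjProd.conj a h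

theorem RelCongr.mul_right (a : F) (h : RelCongr R k x y) : RelCongr R k (x * a) (y * a) := by
  simpa [RelCongr, mul_assoc] using h

theorem relCongr_one_iff : RelCongr R k x 1 ↔ IsConjProd R k x := by
  simp [RelCongr]

theorem relCongr_ladder (u v t : ℕ → F) :
    ∀ m, (∀ j < m, RelCongr R 1 (u j * t (j + 1)) (t j * v j)) →
      RelCongr R m (((List.range m).map u).prod * t m) (t 0 * ((List.range m).map v).prod)
  | 0, _ => by simpa using RelCongr.refl (t 0)
  | m + 1, h => by
    have hcell := (h m m.lt_succ_self).mul_left ((List.range m).map u).prod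
    have hrest := (relCongr_ladder u v t m fun j hj => h j (by omega)).mul_right (v m)
    rw [List.prod_range_succ, List.prod_range_succ, mul_assoc]
    exact (hcell.trans (by simpa only [mul_assoc] using hrest)).mono (by omega)

end ConjProd

section Words

variable {G : Type*} [Group G] {S : Set G}

@[simp]
theorem wordProd_append (w₁ w₂ : List S) :
    wordProd S (w₁ ++ w₂) = wordProd S w₁ * wordProd S w₂ := by
  simp [wordProd]

@[simp]
theorem wordProd_singleton (s : S) : wordProd S [s] = s := by simp [wordProd]

@[simp]
theorem wordToFree_append (w₁ w₂ : List S) :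
    wordToFree S (w₁ ++ w₂) = wordToFree S w₁ * wordToFree S w₂ := by
  simp [wordToFree]

@[simp]
theorem wordToFree_singleton (s : S) : wordToFree S [s] = FreeGroup.of s := by
  simp [wordToFree]

@[simp]
theorem muEval_of (s : S) : muEval S (FreeGroup.of s) = s := FreeGroup.lift_apply_of

theorem wordProd_mem_closure (w : List S) : wordProd S w ∈ Subgroup.closure S := by
  induction w using List.reverseRecOn with
  | nil => exact one_mem _
  | append_singleton w s ih =>
    rw [wordProd_append, wordProd_singleton]
    exact mul_mem ih (Subgroup.subset_closure s.2)

theorem muEval_wordToFree (w : List S) : muEval S (wordToFree S w) = wordProd S w := by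
  simp [wordToFree, wordProd, map_list_prod, Function.comp_def]

theorem norm_wordToFree_le [DecidableEq G] (w : List S) : (wordToFree S w).norm ≤ w.length := by
  induction w with
  | nil => simp [wordToFree]
  | cons s w ih =>
    have := FreeGroup.norm_mul_le (FreeGroup.of s) (wordToFree S w)
    simp only [wordToFree, FreeGroup.norm_of] at this ih
    simp only [wordToFree, List.map_cons, List.prod_cons, List.length_cons]
    omega

theorem area_le_of_isConjProd {R : Set (FreeGroup S)} {w : List S} {k : ℕ}
    (h : IsConjProd R k (wordToFree S w)) : area S R w ≤ k := by
  obtain ⟨L, hL, hmem, hprod⟩ := h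
  choose r hr c hc using fun i : Fin L.length =>
    Group.mem_conjugatesOfSet_iff_exists_conj.1 (hmem _ (L.get_mem i))
  refine (Nat.sInf_le ?_).trans hL
  exact ⟨c, r, hr, by simp only [hc, List.ofFn_get, hprod]⟩

theorem exists_length_eq_wordDist {a b : G} (h : ∃ w : List S, wordProd S w = b⁻¹ * a) :
    ∃ w : List S, w.length = wordDist S a b ∧ wordProd S w = b⁻¹ * a :=
  let ⟨w, hw⟩ := h
  Nat.sInf_mem (s := {n | ∃ w : List S, w.length = n ∧ wordProd S w = b⁻¹ * a})
    ⟨w.length, w, rfl, hw⟩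

theorem muEval_ker_le_normalClosure {R : Set (FreeGroup S)} (hS : S⁻¹ = S)
    (hinv : ∀ (s : S) (hs : (s : G)⁻¹ ∈ S),
      FreeGroup.of s * FreeGroup.of ⟨_, hs⟩ ∈ Subgroup.normalClosure R)
    (hfill : ∀ w : List S, wordProd S w = 1 → wordToFree S w ∈ Subgroup.normalClosure R) :
    (muEval S).ker ≤ Subgroup.normalClosure R := by
  let π := QuotientGroup.mk' (Subgroup.normalClosure R)
  have hword : ∀ y, ∃ w : List S, muEval S y = wordProd S w ∧ π y = π (wordToFree S w) := by
    intro y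
    induction y using FreeGroup.induction_on with
    | C1 => exact ⟨[], by simp [wordProd], by simp [wordToFree]⟩
    | of s => exact ⟨[s], by simp, by simp⟩
    | inv_of s _ =>
      have hs : (s : G)⁻¹ ∈ S := hS.subset (Set.inv_mem_inv.2 s.2)
      refine ⟨[⟨_, hs⟩], by simp, ?_⟩
      rw [wordToFree_singleton, map_inv, inv_eq_iff_mul_eq_one, ← map_mul]
      exact (QuotientGroup.eq_one_iff _).2 (hinv s hs)
    | mul y z hy hz =>
      obtain ⟨wy, hμy, hπy⟩ := hy
      obtain ⟨wz, hμz, hπz⟩ := hz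
      exact ⟨wy ++ wz, by simp [hμy, hμz], by simp [hπy, hπz]⟩
  intro y hy
  obtain ⟨w, hμ, hπ⟩ := hword y
  have hw : wordProd S w = 1 := hμ ▸ hy
  rw [← QuotientGroup.eq_one_iff (N := Subgroup.normalClosure R)]
  exact hπ.trans ((QuotientGroup.eq_one_iff _).2 (hfill w hw))

def shortRelators [DecidableEq G] (S : Set G) (L : ℕ) : Set (FreeGroup S) :=
  {x | x.norm ≤ L ∧ muEval S x = 1}

theorem relCongr_shortRelators [DecidableEq G] {x y : FreeGroup S} {k l L : ℕ}
    (hx : x.norm ≤ k) (hy : y.norm ≤ l) (hL : k + l ≤ L) (hμ : muEval S x = muEval S y) :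
    RelCongr (shortRelators S L) 1 x y := by
  refine RelCongr.of_mem ⟨?_, by simp [hμ]⟩
  calc (x * y⁻¹).norm ≤ x.norm + y⁻¹.norm := FreeGroup.norm_mul_le _ _
    _ ≤ L := by rw [FreeGroup.norm_inv_eq]; omega

theorem finite_shortRelators [DecidableEq G] (hS : S.Finite) (L : ℕ) :
    (shortRelators S L).Finite := by
  have := hS.to_subtype
  exact ((List.finite_length_le (S × Bool) L).preimage FreeGroup.toWord_injective.injOn).subset
    fun x hx => hx.1

end Words

theorem Finset.sum_range_succ_eq_of_eq {M : Type*} [AddCancelCommMonoid M] (f : ℕ → M) {n : ℕ}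
    (h : f n = f 0) : ∑ i ∈ Finset.range n, f (i + 1) = ∑ i ∈ Finset.range n, f i :=
  add_right_cancel (b := f 0) <| by rw [← Finset.sum_range_succ', Finset.sum_range_succ, h]

section Combing

variable {G : Type*} [Group G]

/-- A synchronous combing by words over `S`: `H g j` is the `j`-th vertex of a path from `1` that
stays at `g` from time `N g` on; at each time, the paths to neighbours `g` and `g * s` differ by an
element whose own path has length at most `K`. -/
structure IsCombing (S : Set G) (N : G → ℕ) (H : G → ℕ → G) (K : ℕ) : Prop where
  apply_zero : ∀ g, H g 0 = 1
  apply_of_le : ∀ g j, N g ≤ j → H g j = g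
  step_mem : ∀ g j, (H g j)⁻¹ * H g (j + 1) ∈ S
  fellow_traveller : ∀ g, ∀ s ∈ S, ∀ j, N ((H g j)⁻¹ * H (g * s) j) ≤ K

namespace IsCombing

variable {S : Set G} {N : G → ℕ} {H : G → ℕ → G} {K : ℕ}

def word (hc : IsCombing S N H K) (g : G) (m : ℕ) : List S :=
  (List.range m).map fun j => ⟨_, hc.step_mem g j⟩

theorem length_word (hc : IsCombing S N H K) (g : G) (m : ℕ) : (hc.word g m).length = m := by
  simp [word]

theorem word_succ (hc : IsCombing S N H K) (g : G) (m : ℕ) :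
    hc.word g (m + 1) = hc.word g m ++ [⟨_, hc.step_mem g m⟩] := by
  simp [word, List.range_succ]

theorem wordProd_word (hc : IsCombing S N H K) (g : G) (m : ℕ) :
    wordProd S (hc.word g m) = H g m := by
  induction m with
  | zero => simp [word, wordProd, hc.apply_zero]
  | succ m ih => rw [hc.word_succ, wordProd_append, ih, wordProd_singleton]; group

theorem muEval_wordToFree_word (hc : IsCombing S N H K) (g : G) (m : ℕ) :
    muEval S (wordToFree S (hc.word g m)) = H g m := by
  rw [muEval_wordToFree, hc.wordProd_word]

theorem exists_wordProd_eq (hc : IsCombing S N H K) (g : G) : ∃ w : List S, wordProd S w = g :=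
  ⟨hc.word g (N g), by rw [hc.wordProd_word, hc.apply_of_le g (N g) le_rfl]⟩

theorem closure_eq_top (hc : IsCombing S N H K) : Subgroup.closure S = ⊤ :=
  eq_top_iff.2 fun g _ => by
    obtain ⟨w, rfl⟩ := hc.exists_wordProd_eq g
    exact wordProd_mem_closure w

theorem wordToFree_word (hc : IsCombing S N H K) (g : G) (m : ℕ) :
    wordToFree S (hc.word g m) =
      ((List.range m).map fun j => FreeGroup.of (⟨_, hc.step_mem g j⟩ : S)).prod := by
  simp [wordToFree, word, List.map_map, Function.comp_def]

def rung (hc : IsCombing S N H K) (a b : G) (j : ℕ) : FreeGroup S :=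
  wordToFree S (hc.word ((H a j)⁻¹ * H b j) (N ((H a j)⁻¹ * H b j)))

theorem muEval_rung (hc : IsCombing S N H K) (a b : G) (j : ℕ) :
    muEval S (hc.rung a b j) = (H a j)⁻¹ * H b j := by
  rw [rung, hc.muEval_wordToFree_word, hc.apply_of_le _ _ le_rfl]

variable [DecidableEq G]

theorem norm_rung_le (hc : IsCombing S N H K) (a : G) (s : S) (j : ℕ) :
    (hc.rung a (a * s) j).norm ≤ K :=
  (norm_wordToFree_le _).trans ((hc.length_word _ _).trans_le (hc.fellow_traveller a s s.2 j))

theorem relCongr_ladder_rung (hc : IsCombing S N H K) (a : G) (s : S) (m : ℕ) :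
    RelCongr (shortRelators S (2 * K + 2)) m
      (wordToFree S (hc.word a m) * hc.rung a (a * s) m)
      (hc.rung a (a * s) 0 * wordToFree S (hc.word (a * s) m)) := by
  rw [hc.wordToFree_word, hc.wordToFree_word]
  refine relCongr_ladder _ _ _ m fun j _ => relCongr_shortRelators (k := 1 + K) (l := K + 1)
    ((FreeGroup.norm_mul_le _ _).trans ?_) ((FreeGroup.norm_mul_le _ _).trans ?_) (by omega) ?_
  · rw [FreeGroup.norm_of]; exact Nat.add_le_add_left (hc.norm_rung_le a s _) 1
  · rw [FreeGroup.norm_of]; exact Nat.add_le_add_right (hc.norm_rung_le a s _) 1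
  · simp only [map_mul, muEval_of, muEval_rung]
    group

theorem relCongr_word_of_le (hc : IsCombing S N H K) (h1 : (1 : G) ∈ S) {g : G} {m : ℕ}
    (hm : N g ≤ m) :
    RelCongr (shortRelators S (2 * K + 2)) (m - N g)
      (wordToFree S (hc.word g m)) (wordToFree S (hc.word g (N g))) := by
  induction m, hm using Nat.le_induction with
  | base => simpa using RelCongr.refl _
  | succ m hm ih =>
    have hstep : (⟨_, hc.step_mem g m⟩ : S) = ⟨1, h1⟩ :=
      Subtype.ext (by simp [hc.apply_of_le g m hm, hc.apply_of_le g (m + 1) (by omega)])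
    have hpad : RelCongr (shortRelators S (2 * K + 2)) 1 (FreeGroup.of (⟨1, h1⟩ : S)) 1 :=
      relCongr_shortRelators (FreeGroup.norm_of _).le (FreeGroup.norm_one).le (by omega)
        (by simp)
    have hcell := hpad.mul_left (wordToFree S (hc.word g m))
    rw [mul_one, ← wordToFree_singleton, ← wordToFree_append, ← hstep, ← hc.word_succ] at hcell
    exact (hcell.trans ih).mono (by omega)

theorem relCongr_edge (hc : IsCombing S N H K) (h1 : (1 : G) ∈ S) (a : G) (s : S) :
    RelCongr (shortRelators S (2 * K + 2)) (2 * (N a + N (a * s)) + 2)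
      (wordToFree S (hc.word a (N a)) * FreeGroup.of s)
      (wordToFree S (hc.word (a * s) (N (a * s)))) := by
  set m := max (N a) (N (a * s))
  have hfirst : RelCongr (shortRelators S (2 * K + 2)) 1
      (hc.rung a (a * s) 0 * wordToFree S (hc.word (a * s) m))
      (wordToFree S (hc.word (a * s) m)) := by
    have hrung : RelCongr (shortRelators S (2 * K + 2)) 1 (hc.rung a (a * s) 0) 1 :=
      relCongr_shortRelators (hc.norm_rung_le a s 0) FreeGroup.norm_one.le (by omega)
        (by simp [muEval_rung, hc.apply_zero])
    simpa using hrung.mul_right (wordToFree S (hc.word (a * s) m))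
  have hlast : RelCongr (shortRelators S (2 * K + 2)) 1 (FreeGroup.of s) (hc.rung a (a * s) m) :=
    relCongr_shortRelators (FreeGroup.norm_of _).le (hc.norm_rung_le a s m) (by omega)
      (by rw [muEval_of, muEval_rung, hc.apply_of_le a m (le_max_left _ _),
        hc.apply_of_le (a * s) m (le_max_right _ _), inv_mul_cancel_left])
  -- pad both paths to length `m`, trade `s` for the last rung, cross the ladder, drop rung `0`
  have hpad_a := (hc.relCongr_word_of_le h1 (le_max_left (N a) (N (a * s)))).symm
  have hpad_b := hc.relCongr_word_of_le h1 (le_max_right (N a) (N (a * s)))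
  refine ((((hpad_a.mul_right (FreeGroup.of s)).trans (hlast.mul_left _)).trans
    (hc.relCongr_ladder_rung a s m)).trans (hfirst.trans hpad_b)).mono ?_
  omega

theorem relCongr_take (hc : IsCombing S N H K) (h1 : (1 : G) ∈ S) (w : List S) :
    ∀ i ≤ w.length, RelCongr (shortRelators S (2 * K + 2))
      (∑ j ∈ Finset.range i,
        (2 * (N (wordProd S (w.take j)) + N (wordProd S (w.take (j + 1)))) + 2))
      (wordToFree S (hc.word 1 (N 1)) * wordToFree S (w.take i))
      (wordToFree S (hc.word (wordProd S (w.take i)) (N (wordProd S (w.take i)))))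
  | 0, _ => by simpa [wordToFree, wordProd] using RelCongr.refl _
  | i + 1, hi => by
    have hlt : i < w.length := hi
    have ih := (hc.relCongr_take h1 w i hlt.le).mul_right (FreeGroup.of w[i])
    have hedge := hc.relCongr_edge h1 (wordProd S (w.take i)) w[i]
    rw [Finset.sum_range_succ, List.take_succ_eq_append_getElem hlt, wordToFree_append,
      wordToFree_singleton, ← mul_assoc, wordProd_append, wordProd_singleton]
    exact ih.trans hedge

theorem isConjProd_of_wordProd_eq_one (hc : IsCombing S N H K) (h1 : (1 : G) ∈ S) {w : List S}
    (hw : wordProd S w = 1) :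
    IsConjProd (shortRelators S (2 * K + 2))
      (∑ j ∈ Finset.range w.length,
        (2 * (N (wordProd S (w.take j)) + N (wordProd S (w.take (j + 1)))) + 2))
      (wordToFree S w) := by
  have h := (hc.relCongr_take h1 w w.length le_rfl).mul_left
    (wordToFree S (hc.word 1 (N 1)))⁻¹
  rw [List.take_length, hw, inv_mul_cancel_left, inv_mul_cancel] at h
  exact relCongr_one_iff.1 h

theorem normalClosure_eq_ker (hc : IsCombing S N H K) (h1 : (1 : G) ∈ S) (hS : S⁻¹ = S) :
    Subgroup.normalClosure (shortRelators S (2 * K + 2)) = (muEval S).ker := by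
  refine le_antisymm (Subgroup.normalClosure_le_normal fun r hr => hr.2) ?_
  refine muEval_ker_le_normalClosure hS (fun s hs => ?_) fun w hw =>
    (hc.isConjProd_of_wordProd_eq_one h1 hw).mem_normalClosure
  refine Subgroup.subset_normalClosure ⟨?_, by simp⟩
  exact (FreeGroup.norm_mul_le _ _).trans (by simp only [FreeGroup.norm_of]; omega)

theorem area_le (hc : IsCombing S N H K) (h1 : (1 : G) ∈ S) {c : ℕ}
    (hN : ∀ g, N g ≤ c * wordDist S g 1 + 1) {w : List S} (hw : wordProd S w = 1) :
    area S (shortRelators S (2 * K + 2)) w ≤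
      (4 * c + 6) * ∑ i ∈ Finset.range w.length,
        (wordDist S (wordProd S (w.take (i + 1))) 1 + 1) := by
  set g : ℕ → G := fun i => wordProd S (w.take i)
  have hshift : ∑ i ∈ Finset.range w.length, N (g i) =
      ∑ i ∈ Finset.range w.length, N (g (i + 1)) := by
    refine (Finset.sum_range_succ_eq_of_eq (fun i => N (g i)) ?_).symm
    simp only [g, List.take_length, hw, List.take_zero]
    rfl
  calc area S (shortRelators S (2 * K + 2)) w
      ≤ ∑ i ∈ Finset.range w.length, (2 * (N (g i) + N (g (i + 1))) + 2) :=
        area_le_of_isConjProd (hc.isConjProd_of_wordProd_eq_one h1 hw)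
    _ = ∑ i ∈ Finset.range w.length, (4 * N (g (i + 1)) + 2) := by
        simp only [mul_add, Finset.sum_add_distrib, ← Finset.mul_sum, hshift]; ring
    _ ≤ ∑ i ∈ Finset.range w.length, (4 * c + 6) * (wordDist S (g (i + 1)) 1 + 1) := by
        gcongr with i
        nlinarith [hN (g (i + 1))]
    _ = _ := by rw [Finset.mul_sum]

end IsCombing

end Combing

section CAT0

variable {X : Type*} [MetricSpace X] {γ γ' : ℝ → X} {p q q' : X}

theorem IsGeodesic.dist_left (hγ : IsGeodesic γ p q) {s : ℝ} (hs : s ∈ Set.Icc 0 (dist p q)) :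
    dist p (γ s) = s := by
  have h := hγ.2.2 0 ⟨le_rfl, dist_nonneg⟩ s hs
  rwa [hγ.1, zero_sub, abs_neg, abs_of_nonneg hs.1] at h

theorem IsCAT0.dist_geodesic_le (hcat : IsCAT0 X) (hγ : IsGeodesic γ p q)
    (hγ' : IsGeodesic γ' p q') {t : ℝ} (ht : t ∈ Set.Icc (0 : ℝ) 1) :
    dist (γ (t * dist p q)) (γ' (t * dist p q')) ≤ t * dist q q' := by
  have hq := hcat q p q' γ' hγ' t ht
  have hγ'q := hcat (γ' (t * dist p q')) p q γ hγ t ht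
  have hγ'p : dist (γ' (t * dist p q')) p = t * dist p q' := by
    rw [dist_comm]
    exact hγ'.dist_left ⟨by nlinarith [ht.1, dist_nonneg (x := p) (y := q')],
      by nlinarith [ht.2, dist_nonneg (x := p) (y := q')]⟩
  rw [hγ'p, dist_comm (γ' _) q, dist_comm (γ' _)] at hγ'q
  rw [dist_comm q p] at hq
  have hsq : dist (γ (t * dist p q)) (γ' (t * dist p q')) ^ 2 ≤ (t * dist q q') ^ 2 := by
    nlinarith [mul_le_mul_of_nonneg_left hq ht.1]
  exact (pow_le_pow_iff_left₀ dist_nonneg (mul_nonneg ht.1 dist_nonneg) two_ne_zero).1 hsq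

theorem IsCAT0.dist_geodesic_min_le (hcat : IsCAT0 X) (hγ : IsGeodesic γ p q)
    (hγ' : IsGeodesic γ' p q') {a : ℝ} (ha : 0 ≤ a) :
    dist (γ (min a (dist p q))) (γ' (min a (dist p q'))) ≤ 3 * dist q q' := by
  obtain ⟨t, ht, htL⟩ : ∃ t ∈ Set.Icc (0 : ℝ) 1, t * dist p q = min a (dist p q) := by
    rcases (dist_nonneg (x := p) (y := q)).eq_or_lt with h | h
    · exact ⟨0, ⟨le_rfl, zero_le_one⟩, by rw [← h, min_eq_right ha, mul_zero]⟩
    · exact ⟨min a (dist p q) / dist p q,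
        ⟨by positivity, div_le_one_of_le₀ (min_le_right _ _) h.le⟩, div_mul_cancel₀ _ h.ne'⟩
  have hpq : |dist p q - dist p q'| ≤ dist q q' := by
    simpa only [dist_comm p] using abs_dist_sub_le q q' p
  have hmin : |min a (dist p q) - min a (dist p q')| ≤ dist q q' :=
    (abs_min_sub_min_le_max a _ a _).trans (by simpa using hpq)
  have htL' : t * dist p q' ∈ Set.Icc 0 (dist p q') :=
    ⟨mul_nonneg ht.1 dist_nonneg, mul_le_of_le_one_left dist_nonneg ht.2⟩
  have hmin' : min a (dist p q') ∈ Set.Icc 0 (dist p q') :=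
    ⟨le_min ha dist_nonneg, min_le_right _ _⟩
  have hslide : |t * dist p q' - min a (dist p q')| ≤ 2 * dist q q' := by
    have hscale : |t * dist p q' - t * dist p q| ≤ dist q q' := by
      rw [← mul_sub, abs_mul, abs_of_nonneg ht.1, abs_sub_comm]
      exact (mul_le_of_le_one_left (abs_nonneg _) ht.2).trans hpq
    calc |t * dist p q' - min a (dist p q')|
        ≤ |t * dist p q' - t * dist p q| + |t * dist p q - min a (dist p q')| := abs_sub_le _ _ _
      _ ≤ dist q q' + dist q q' := add_le_add hscale (htL ▸ hmin)
      _ = 2 * dist q q' := by ring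
  calc dist (γ (min a (dist p q))) (γ' (min a (dist p q')))
      ≤ dist (γ (t * dist p q)) (γ' (t * dist p q')) +
          dist (γ' (t * dist p q')) (γ' (min a (dist p q'))) := by
        rw [← htL]; exact dist_triangle _ _ _
    _ ≤ t * dist q q' + 2 * dist q q' := by
        rw [hγ'.2.2 _ htL' _ hmin']
        exact add_le_add (hcat.dist_geodesic_le hγ hγ' ht) hslide
    _ ≤ 3 * dist q q' := by nlinarith [ht.2, dist_nonneg (x := q) (y := q')]

end CAT0

section OrbitComb

variable {G X : Type*} [Group G] [MetricSpace X] [MulAction G X]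

theorem dist_inv_mul_smul [IsIsometricSMul G X] (a b : G) (x : X) :
    dist x ((a⁻¹ * b) • x) = dist (a • x) (b • x) := by
  rw [← dist_smul a, mul_smul, smul_inv_smul]

theorem inv_setOf_dist_smul_le [IsIsometricSMul G X] (p : X) (r : ℝ) :
    {g : G | dist p (g • p) ≤ r}⁻¹ = {g : G | dist p (g • p) ≤ r} := by
  ext g
  simp only [Set.mem_inv, Set.mem_ofPred_eq]
  rw [← mul_one g⁻¹, dist_inv_mul_smul, one_smul, dist_comm]

theorem finite_setOf_dist_smul_le [ProperSpace X]
    (hpd : ∀ K K' : Set X, IsCompact K → IsCompact K' →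
      {g : G | ((g • ·) '' K ∩ K').Nonempty}.Finite) (p : X) (r : ℝ) :
    {g : G | dist p (g • p) ≤ r}.Finite :=
  (hpd {p} (Metric.closedBall p r) isCompact_singleton (isCompact_closedBall p r)).subset
    fun g hg => ⟨g • p, ⟨p, rfl, rfl⟩, by rwa [Metric.mem_closedBall, dist_comm]⟩

theorem dist_smul_wordProd_le [IsIsometricSMul G X] {S : Set G} {p : X} {r : ℝ}
    (hS : ∀ s ∈ S, dist p (s • p) ≤ r) (w : List S) :
    dist p (wordProd S w • p) ≤ r * w.length := by
  induction w using List.reverseRecOn with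
  | nil => simp [wordProd]
  | append_singleton w s ih =>
    rw [wordProd_append, wordProd_singleton, List.length_append, List.length_singleton,
      Nat.cast_add, Nat.cast_one, mul_add_one, mul_smul]
    calc dist p (wordProd S w • (s : G) • p)
        ≤ dist p (wordProd S w • p) + dist (wordProd S w • p) (wordProd S w • (s : G) • p) :=
          dist_triangle _ _ _
      _ ≤ r * w.length + r := by rw [dist_smul]; exact add_le_add ih (hS s s.2)

noncomputable def orbitCombLength (p : X) (D : ℝ) (g : G) : ℕ := ⌈dist p (g • p) / D⌉₊ + 1

noncomputable def orbitCombPoint (Γ : G → ℝ → X) (p : X) (D : ℝ) (g : G) (j : ℕ) : X :=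
  Γ g (min (j * D) (dist p (g • p)))

/-- The combing of `G` by orbit points shadowing the geodesics `Γ g` from `p` to `g • p`:
`φ x • p` is an orbit point near `x`. -/
noncomputable def orbitComb (φ : X → G) (Γ : G → ℝ → X) (p : X) (D : ℝ) (g : G) (j : ℕ) : G :=
  if j = 0 then 1 else if orbitCombLength p D g ≤ j then g else φ (orbitCombPoint Γ p D g j)

variable {p : X} {D : ℝ} {φ : X → G} {Γ : G → ℝ → X}

theorem orbitCombLength_le (hD : 0 < D) {g : G} {n : ℕ} (h : dist p (g • p) ≤ n * D) :
    orbitCombLength p D g ≤ n + 1 :=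
  Nat.add_le_add_right (Nat.ceil_le.2 ((div_le_iff₀ hD).2 h)) 1

theorem dist_smul_le_of_orbitCombLength_le (hD : 0 < D) {g : G} {j : ℕ}
    (h : orbitCombLength p D g ≤ j) : dist p (g • p) ≤ j * D := by
  have hceil : (⌈dist p (g • p) / D⌉₊ : ℝ) ≤ j := by
    exact_mod_cast (Nat.le_succ _).trans h
  exact (div_le_iff₀ hD).1 ((Nat.le_ceil _).trans hceil)

theorem dist_orbitCombPoint_smul_le (hD : 0 < D) (hφ : ∀ x, dist x (φ x • p) ≤ 2 * D)
    (hΓ : ∀ g, IsGeodesic (Γ g) p (g • p)) (g : G) (j : ℕ) :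
    dist (orbitCombPoint Γ p D g j) (orbitComb φ Γ p D g j • p) ≤ 2 * D := by
  unfold orbitComb orbitCombPoint
  split_ifs with h0 hN
  · rw [h0, Nat.cast_zero, zero_mul, min_eq_left dist_nonneg, (hΓ g).1, one_smul, dist_self]
    positivity
  · rw [min_eq_right (dist_smul_le_of_orbitCombLength_le hD hN), (hΓ g).2.1, dist_self]
    positivity
  · exact hφ _

theorem dist_orbitCombPoint_succ_le (hD : 0 < D) (hΓ : ∀ g, IsGeodesic (Γ g) p (g • p))
    (g : G) (j : ℕ) :
    dist (orbitCombPoint Γ p D g j) (orbitCombPoint Γ p D g (j + 1)) ≤ D := by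
  have hmem : ∀ i : ℕ, min (i * D) (dist p (g • p)) ∈ Set.Icc 0 (dist p (g • p)) := fun i =>
    ⟨le_min (by positivity) dist_nonneg, min_le_right _ _⟩
  rw [orbitCombPoint, orbitCombPoint, (hΓ g).2.2 _ (hmem j) _ (hmem (j + 1))]
  refine (abs_min_sub_min_le_max _ _ _ _).trans ?_
  rw [sub_self, abs_zero, Nat.cast_succ, show (j : ℝ) * D - (j + 1) * D = -D by ring, abs_neg,
    abs_of_pos hD, max_eq_left hD.le]

theorem dist_orbitComb_succ_le (hD : 0 < D) (hφ : ∀ x, dist x (φ x • p) ≤ 2 * D)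
    (hΓ : ∀ g, IsGeodesic (Γ g) p (g • p)) (g : G) (j : ℕ) :
    dist (orbitComb φ Γ p D g j • p) (orbitComb φ Γ p D g (j + 1) • p) ≤ 5 * D := by
  have h₁ := dist_orbitCombPoint_smul_le hD hφ hΓ g j
  have h₂ := dist_orbitCombPoint_succ_le hD hΓ g j
  have h₃ := dist_orbitCombPoint_smul_le hD hφ hΓ g (j + 1)
  rw [dist_comm] at h₁
  linarith [dist_triangle4 (orbitComb φ Γ p D g j • p) (orbitCombPoint Γ p D g j)
    (orbitCombPoint Γ p D g (j + 1)) (orbitComb φ Γ p D g (j + 1) • p)]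

theorem dist_orbitComb_le (hcat : IsCAT0 X) (hD : 0 < D) (hφ : ∀ x, dist x (φ x • p) ≤ 2 * D)
    (hΓ : ∀ g, IsGeodesic (Γ g) p (g • p)) {g g' : G} (hgg' : dist (g • p) (g' • p) ≤ 5 * D)
    (j : ℕ) : dist (orbitComb φ Γ p D g j • p) (orbitComb φ Γ p D g' j • p) ≤ 19 * D := by
  have h₁ := dist_orbitCombPoint_smul_le hD hφ hΓ g j
  have h₂ : dist (orbitCombPoint Γ p D g j) (orbitCombPoint Γ p D g' j) ≤ 15 * D :=
    (hcat.dist_geodesic_min_le (hΓ g) (hΓ g') (by positivity)).trans (by linarith)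
  have h₃ := dist_orbitCombPoint_smul_le hD hφ hΓ g' j
  rw [dist_comm] at h₁
  linarith [dist_triangle4 (orbitComb φ Γ p D g j • p) (orbitCombPoint Γ p D g j)
    (orbitCombPoint Γ p D g' j) (orbitComb φ Γ p D g' j • p)]

theorem isCombing_orbitComb [IsIsometricSMul G X] (hcat : IsCAT0 X) (hD : 0 < D)
    (hφ : ∀ x, dist x (φ x • p) ≤ 2 * D) (hΓ : ∀ g, IsGeodesic (Γ g) p (g • p)) :
    IsCombing {g : G | dist p (g • p) ≤ 5 * D} (orbitCombLength p D) (orbitComb φ Γ p D) 20 where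
  apply_zero g := if_pos rfl
  apply_of_le g j hj := by
    rw [orbitComb, if_neg (by unfold orbitCombLength at hj; omega), if_pos hj]
  step_mem g j := by
    simpa only [Set.mem_ofPred_eq, dist_inv_mul_smul] using dist_orbitComb_succ_le hD hφ hΓ g j
  fellow_traveller g s hs j := by
    refine orbitCombLength_le hD ?_
    rw [dist_inv_mul_smul]
    refine (dist_orbitComb_le hcat hD hφ hΓ ?_ j).trans (by norm_num)
    rwa [mul_smul, dist_smul]

theorem orbitCombLength_le_wordDist [IsIsometricSMul G X] (hD : 0 < D) {S : Set G} {c : ℕ}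
    (hS : ∀ s ∈ S, dist p (s • p) ≤ c * D) {g : G} (hg : ∃ w : List S, wordProd S w = g) :
    orbitCombLength p D g ≤ c * wordDist S g 1 + 1 := by
  obtain ⟨w, hlen, hw⟩ := exists_length_eq_wordDist (a := g) (b := 1) (by simpa using hg)
  refine orbitCombLength_le hD ?_
  have := dist_smul_wordProd_le hS w
  rw [hw, inv_one, one_mul, hlen] at this
  push_cast
  linarith

end OrbitComb

/-- A CAT(0) group satisfies the quadratic radial isoperimetric
inequality with respect to some finite symmetric generating set. -/
theorem cat0_group_quadratic_radial_isoperimetric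
    {G X : Type*} [Group G] [MetricSpace X] [MulAction G X]
    (hgeo : IsGeodesicSpace X) (hcat : IsCAT0 X) (hproper : ProperSpace X)
    -- `G` acts by isometries
    (hiso : ∀ (g : G) (x y : X), dist (g • x) (g • y) = dist x y)
    -- properly discontinuously
    (hpd : ∀ K K' : Set X, IsCompact K → IsCompact K' →
      {g : G | ((g • ·) '' K ∩ K').Nonempty}.Finite)
    -- and cocompactly
    (hcocpt : ∃ (p : X) (D : ℝ), 0 < D ∧ ∀ x : X, ∃ g : G, dist x (g • p) ≤ 2 * D) :
    ∃ S : Set G, S.Finite ∧ S⁻¹ = S ∧ Subgroup.closure S = ⊤ ∧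
      ∃ R : Set (FreeGroup S), R.Finite ∧ (∀ r ∈ R, muEval S r = 1) ∧
        Subgroup.normalClosure R = (muEval S).ker ∧
        ∃ C : ℝ, 0 < C ∧ ∀ w : List S, wordProd S w = 1 →
          (area S R w : ℝ) ≤ C * ∑ i ∈ Finset.range w.length,
            ((wordDist S (wordProd S (w.take (i + 1))) 1 : ℝ) + 1) := by
  classical
  obtain ⟨p, D, hD, hcocpt⟩ := hcocpt
  choose φ hφ using hcocpt
  choose Γ hΓ using fun g : G => hgeo p (g • p)
  have : IsIsometricSMul G X := ⟨fun g => Isometry.of_dist_eq (hiso g)⟩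
  set S : Set G := {g | dist p (g • p) ≤ 5 * D}
  have hc := isCombing_orbitComb hcat hD hφ hΓ
  have h1 : (1 : G) ∈ S := by
    simp only [S, Set.mem_ofPred_eq, one_smul, dist_self]
    positivity
  have hS : S⁻¹ = S := inv_setOf_dist_smul_le p _
  have hN (g : G) : orbitCombLength p D g ≤ 5 * wordDist S g 1 + 1 :=
    orbitCombLength_le_wordDist hD (fun s hs => by exact_mod_cast hs) (hc.exists_wordProd_eq g)
  refine ⟨S, finite_setOf_dist_smul_le hpd p _, hS, hc.closure_eq_top, _,
    finite_shortRelators (finite_setOf_dist_smul_le hpd p _) _, fun r hr => hr.2,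
    hc.normalClosure_eq_ker h1 hS, 26, by norm_num, fun w hw => ?_⟩
  exact_mod_cast hc.area_le h1 hN hw
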